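/- Let γ > 1, R, θ₊, ρ₊, u₊ > 0 with u₊ > √(γRθ₊). Define H(w) = L(w)(1-w) where L is as in (2.10) with the '+' branch (since u₊² > Rθ₊), i.e. L(w) = (Rρ₊u₊/2)·((Rθ₊+3u₊² + G₂(w))/((u₊² - Rθ₊) + G₂(w)) - 2γ/(γ-1)) with G₂(w) = √((Rθ₊+u₊²)² - 4Rθ₊u₊² w). Then H'(1) > 0, i.e. the derivative of H at w = 1 is positive. -/
import Mathlib


theorem stmt_17 (γ R θ ρ u : ℝ) (hγ : 1 < γ) (hR : 0 < R) (hθ : 0 < θ) (hρ : 0 < ρ)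
    (hu : Real.sqrt (γ * R * θ) < u) :
    0 < deriv (fun w =>
      (R * ρ * u / 2) *
        ((R * θ + 3 * u ^ 2 + Real.sqrt ((R * θ + u ^ 2) ^ 2 - 4 * R * θ * u ^ 2 * w)) /
          ((u ^ 2 - R * θ) + Real.sqrt ((R * θ + u ^ 2) ^ 2 - 4 * R * θ * u ^ 2 * w)) -
          2 * γ / (γ - 1)) * (1 - w)) 1 := by
  have hu0 : 0 < u := lt_of_le_of_lt (Real.sqrt_nonneg _) hu
  have hγRθ : 0 ≤ γ * R * θ := by positivity
  have hu2 : γ * R * θ < u ^ 2 := by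
    nlinarith [Real.sq_sqrt hγRθ, Real.sqrt_nonneg (γ * R * θ)]
  have hRθ : R * θ < u ^ 2 := by nlinarith
  have hsub : 0 < u ^ 2 - R * θ := sub_pos.2 hRθ
  have hg1 : (R * θ + u ^ 2) ^ 2 - 4 * R * θ * u ^ 2 * (1 : ℝ) = (u ^ 2 - R * θ) ^ 2 := by
    ring
  have hgd : DifferentiableAt ℝ (fun w : ℝ => (R * θ + u ^ 2) ^ 2 - 4 * R * θ * u ^ 2 * w) 1 :=
    (differentiableAt_const _).sub ((differentiableAt_const _).mul differentiableAt_id)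
  have hs : DifferentiableAt ℝ
      (fun w : ℝ => Real.sqrt ((R * θ + u ^ 2) ^ 2 - 4 * R * θ * u ^ 2 * w)) 1 :=
    hgd.sqrt (by rw [hg1]; positivity)
  have hs1 : Real.sqrt ((R * θ + u ^ 2) ^ 2 - 4 * R * θ * u ^ 2 * (1 : ℝ)) = u ^ 2 - R * θ := by
    rw [hg1, Real.sqrt_sq hsub.le]
  have hden1 : (u ^ 2 - R * θ) + Real.sqrt ((R * θ + u ^ 2) ^ 2 - 4 * R * θ * u ^ 2 * (1 : ℝ))
      ≠ 0 := by rw [hs1]; positivity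
  set L : ℝ → ℝ := fun w =>
      (R * ρ * u / 2) *
        ((R * θ + 3 * u ^ 2 + Real.sqrt ((R * θ + u ^ 2) ^ 2 - 4 * R * θ * u ^ 2 * w)) /
          ((u ^ 2 - R * θ) + Real.sqrt ((R * θ + u ^ 2) ^ 2 - 4 * R * θ * u ^ 2 * w)) -
          2 * γ / (γ - 1)) with hLdef
  have hL : DifferentiableAt ℝ L 1 :=
    (differentiableAt_const _).mul
      ((((differentiableAt_const _).add hs).div ((differentiableAt_const _).add hs)
        hden1).sub (differentiableAt_const _))
  have hH : HasDerivAt (fun w => L w * (1 - w))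
      (deriv L 1 * (1 - 1) + L 1 * (0 - 1)) 1 :=
    hL.hasDerivAt.mul ((hasDerivAt_const (1 : ℝ) (1 : ℝ)).sub (hasDerivAt_id 1))
  have hderiv : deriv (fun w => L w * (1 - w)) 1 = -L 1 := by
    rw [hH.deriv]; ring
  rw [hderiv, hLdef]
  simp only [hs1]
  have hγ1 : 0 < γ - 1 := sub_pos.2 hγ
  have hdiv : (R * θ + 3 * u ^ 2 + (u ^ 2 - R * θ)) / ((u ^ 2 - R * θ) + (u ^ 2 - R * θ))
      < 2 * γ / (γ - 1) := by
    rw [div_lt_div_iff₀ (by linarith) hγ1]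
    nlinarith
  have : 0 < (R * ρ * u / 2) * (2 * γ / (γ - 1) -
      (R * θ + 3 * u ^ 2 + (u ^ 2 - R * θ)) / ((u ^ 2 - R * θ) + (u ^ 2 - R * θ))) := by
    apply mul_pos (by positivity)
    linarith
  linarith
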